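/- Let K be a field, let 1 ≤ k ≤ n, and let f ∈ K[x_1,…,x_n]. Write f = Σ_α c_α·x^α, where α ranges over multi-indices supported on the first k variables x_1,…,x_k and each coefficient c_α lies in K[x_{k+1},…,x_n]. Let b ∈ K^{n−k} and let a = (0,…,0,b) ∈ K^n be the corresponding point of the subspace {x_1 = … = x_k = 0}. Then for every natural number μ: f ∈ m_a^μ if and only if c_α ∈ m_b^{μ−|α|} (in K[x_{k+1},…,x_n]) for every multi-index α with |α| < μ. -/

import Mathlib

/-!
Translating by `a` turns `m_a` into the ideal of the variables, whose `μ`-th power consists of the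
polynomials with no monomial of total degree `< μ`. Since `a = (0, b)`, this translation fixes the
variables `x` and acts on the coefficients `c_α` as translation by `b`. After translating, both
sides say the same thing: no monomial `x^α y^β` with `|α| + |β| < μ` occurs.
-/

/-- The maximal ideal of `K[x_i : i ∈ σ]` at the point `a`. -/
noncomputable def maxIdeal (K : Type*) [Field K] (σ : Type*) (a : σ → K) :
    Ideal (MvPolynomial σ K) :=
  Ideal.span (Set.range fun i => MvPolynomial.X i - MvPolynomial.C (a i))

open MvPolynomial Finsupp

theorem Finsupp.degree_sumElim {σ τ M : Type*} [AddCommMonoid M] (f : σ →₀ M) (g : τ →₀ M) :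
    degree (sumElim f g) = degree f + degree g := by
  rw [sumElim_eq_add, map_add, degree_mapDomain, degree_mapDomain]

theorem Finsupp.eq_sumElim_iff {σ τ M : Type*} [AddMonoid M] (d : σ ⊕ τ →₀ M) (f : σ →₀ M)
    (g : τ →₀ M) :
    d = sumElim f g ↔
      (sumFinsuppAddEquivProdFinsupp d).1 = f ∧ (sumFinsuppAddEquivProdFinsupp d).2 = g := by
  have : sumElim f g = sumFinsuppAddEquivProdFinsupp.symm (f, g) := by ext (i | i) <;> rfl
  rw [this, AddEquiv.eq_symm_apply, Prod.ext_iff]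

namespace MvPolynomial

section sumAlgEquiv

variable {R : Type*} [CommSemiring R] {σ τ : Type*}

theorem sumAlgEquiv_monomial (d : σ ⊕ τ →₀ ℕ) (r : R) :
    sumAlgEquiv R σ τ (monomial d r) =
      monomial (sumFinsuppAddEquivProdFinsupp d).1
        (monomial (sumFinsuppAddEquivProdFinsupp d).2 r) := by
  simp [sumAlgEquiv, monomial]

theorem coeff_coeff_sumAlgEquiv (p : MvPolynomial (σ ⊕ τ) R) (α : σ →₀ ℕ) (β : τ →₀ ℕ) :
    coeff β (coeff α (sumAlgEquiv R σ τ p)) = coeff (sumElim α β) p := by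
  classical
  induction p using MvPolynomial.induction_on' with
  | monomial d r =>
    simp only [sumAlgEquiv_monomial, coeff_monomial, apply_ite (coeff β), coeff_zero, ← ite_and]
    exact if_congr (eq_sumElim_iff d α β).symm rfl rfl
  | add p q hp hq => simp only [map_add, coeff_add, hp, hq]

theorem mem_pow_idealOfVars_iff_coeff_sumAlgEquiv (p : MvPolynomial (σ ⊕ τ) R) (μ : ℕ) :
    p ∈ idealOfVars (σ ⊕ τ) R ^ μ ↔
      ∀ α : σ →₀ ℕ, degree α < μ →
        coeff α (sumAlgEquiv R σ τ p) ∈ idealOfVars τ R ^ (μ - degree α) := by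
  simp only [mem_pow_idealOfVars_iff', coeff_coeff_sumAlgEquiv]
  constructor
  · intro hp α _ β hβ
    exact hp _ (by rw [degree_sumElim]; omega)
  · intro hp d hd
    have hsplit := (eq_sumElim_iff d _ _).mpr ⟨rfl, rfl⟩
    rw [hsplit, degree_sumElim] at hd
    rw [hsplit]
    exact hp _ (by omega) _ (by omega)

end sumAlgEquiv

section translate

variable {R : Type*} [CommRing R] {σ τ : Type*}

noncomputable def translate (c : σ → R) : MvPolynomial σ R ≃ₐ[R] MvPolynomial σ R :=
  AlgEquiv.ofAlgHom (aeval fun i => X i + C (c i)) (aeval fun i => X i - C (c i))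
    (by ext i : 1; simp) (by ext i : 1; simp)

@[simp]
theorem translate_X (c : σ → R) (i : σ) : translate c (X i) = X i + C (c i) := by
  simp [translate]

@[simp]
theorem translate_C (c : σ → R) (r : R) : translate c (C r) = C r :=
  (translate c).commutes r

theorem sumAlgEquiv_translate_sumElim_zero (b : τ → R) (p : MvPolynomial (σ ⊕ τ) R) :
    sumAlgEquiv R σ τ (translate (Sum.elim (fun _ => 0) b) p) =
      map (translate b : MvPolynomial τ R →+* MvPolynomial τ R) (sumAlgEquiv R σ τ p) := by
  have : (sumAlgEquiv R σ τ).toAlgHom.comp (translate (Sum.elim (fun _ => 0) b)).toAlgHom =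
      (mapAlgHom (translate b).toAlgHom).comp (sumAlgEquiv R σ τ).toAlgHom := by
    ext (i | i) : 1 <;> simp
  exact DFunLike.congr_fun this p

end translate

theorem map_translate_maxIdeal {K σ : Type*} [Field K] (c : σ → K) :
    (maxIdeal K σ c).map (translate c) = idealOfVars σ K := by
  rw [maxIdeal, Ideal.map_span, ← Set.range_comp]
  have : (translate c ∘ fun i => X i - C (c i)) = X := by
    funext i
    simp
  rw [this]

theorem mem_maxIdeal_pow_iff {K σ : Type*} [Field K] (c : σ → K) (g : MvPolynomial σ K) (μ : ℕ) :
    g ∈ maxIdeal K σ c ^ μ ↔ translate c g ∈ idealOfVars σ K ^ μ := by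
  rw [← map_translate_maxIdeal c, ← Ideal.map_pow]
  exact Ideal.apply_mem_of_equiv_iff (f := (translate c).toRingEquiv).symm

end MvPolynomial

theorem mem_maxIdeal_pow_iff_coeff_general (K : Type*) [Field K] (k m : ℕ)
    (f : MvPolynomial (Fin k ⊕ Fin m) K) (b : Fin m → K) (μ : ℕ) :
    f ∈ maxIdeal K (Fin k ⊕ Fin m) (Sum.elim (fun _ => (0 : K)) b) ^ μ ↔
      ∀ α : Fin k →₀ ℕ, (α.sum fun _ e => e) < μ →
        MvPolynomial.coeff α ((MvPolynomial.sumAlgEquiv K (Fin k) (Fin m)) f) ∈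
          maxIdeal K (Fin m) b ^ (μ - (α.sum fun _ e => e)) := by
  rw [mem_maxIdeal_pow_iff, mem_pow_idealOfVars_iff_coeff_sumAlgEquiv,
    sumAlgEquiv_translate_sumElim_zero]
  simp only [coeff_map, mem_maxIdeal_pow_iff]
  -- `degree α` unfolds to `α.sum fun _ e => e`
  rfl

/-- Expansion along a coordinate subspace: writing `f ∈ K[x_1,…,x_k,y_1,…,y_m]` as
`f = Σ_α c_α x^α` with `c_α ∈ K[y_1,…,y_m]`, and `a = (0,b)` a point of the subspace
`{x_1 = … = x_k = 0}`, one has `f ∈ m_a^μ` iff `c_α ∈ m_b^{μ-|α|}` for every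
multi-index `α` with `|α| < μ`. -/
theorem mem_maxIdeal_pow_iff_coeff (K : Type*) [Field K] (k m : ℕ) (hk : 1 ≤ k)
    (f : MvPolynomial (Fin k ⊕ Fin m) K) (b : Fin m → K) (μ : ℕ) :
    f ∈ maxIdeal K (Fin k ⊕ Fin m) (Sum.elim (fun _ => (0 : K)) b) ^ μ ↔
      ∀ α : Fin k →₀ ℕ, (α.sum fun _ e => e) < μ →
        MvPolynomial.coeff α ((MvPolynomial.sumAlgEquiv K (Fin k) (Fin m)) f) ∈
          maxIdeal K (Fin m) b ^ (μ - (α.sum fun _ e => e)) :=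
  mem_maxIdeal_pow_iff_coeff_general K k m f b μ
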